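/- Let K be a field, H a finite-dimensional K-vector space, n ≥ 0 an integer, and let F^0 ⊇ F^1 ⊇ ⋯ ⊇ F^{n+1} and G^0 ⊇ G^1 ⊇ ⋯ ⊇ G^{n+1} be decreasing chains of subspaces of H with F^0 = G^0 = H and F^{n+1} = G^{n+1} = 0, which are opposite, i.e. H = F^p ⊕ G^{n+1−p} for every 0 ≤ p ≤ n+1. Then H decomposes as the internal direct sum H = ⊕_{p+q=n} (F^p ∩ G^q), i.e. the subspaces H^{p,n−p} := F^p ∩ G^{n−p} for 0 ≤ p ≤ n are linearly independent and together span H. -/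

import Mathlib

/-!
Reindex the second filtration as the increasing chain `E i := G^{n+1-i}`, so that `F^i` and
`E^i` are complements for every `i`. In a modular lattice, `F^{p+1} ⊔ E^{p+1} = ⊤` and
`F^{p+1} ≤ F^p` give `F^p = F^{p+1} ⊔ (F^p ⊓ E^{p+1})`, so descending from `F^{n+1} = 0` to
`F^0 = H` shows that the pieces span. Every other piece lies in `F^{p+1} ⊔ E^p`, and dually
`E^{p+1} ⊓ (F^{p+1} ⊔ E^p) = E^p`, so piece `p` meets this join in `F^p ⊓ E^p = 0`.
-/

section ModularLattice

variable {α : Type*} [CompleteLattice α] [IsModularLattice α] {n : ℕ}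
  {F E : Fin (n + 1) → α}

theorem Fin.iSupIndep_inf_castSucc_succ (hF : Antitone F) (hE : Monotone E)
    (hdisj : ∀ i, Disjoint (F i) (E i)) :
    iSupIndep fun p : Fin n => F p.castSucc ⊓ E p.succ := by
  refine iSupIndep_def.mpr fun p => ?_
  have hothers : ⨆ (j) (_ : j ≠ p), F j.castSucc ⊓ E j.succ ≤ F p.succ ⊔ E p.castSucc :=
    iSup₂_le fun j hj => hj.lt_or_gt.elim
      (fun hjp => le_sup_of_le_right <| inf_le_right.trans <| hE <| succ_le_castSucc_iff.mpr hjp)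
      (fun hpj => le_sup_of_le_left <| inf_le_left.trans <| hF <| succ_le_castSucc_iff.mpr hpj)
  have hE_inf : E p.succ ⊓ (F p.succ ⊔ E p.castSucc) = E p.castSucc := by
    rw [← inf_sup_assoc_of_le _ (hE (castSucc_le_succ p)), (hdisj p.succ).symm.eq_bot, bot_sup_eq]
  refine Disjoint.mono_right hothers ?_
  rw [disjoint_iff, inf_assoc, hE_inf]
  exact (hdisj _).eq_bot

theorem Fin.iSup_inf_castSucc_succ_eq_top (hF : Antitone F) (hF0 : F 0 = ⊤)
    (hFlast : F (last n) = ⊥) (hcodisj : ∀ i, Codisjoint (F i) (E i)) :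
    ⨆ p : Fin n, F p.castSucc ⊓ E p.succ = ⊤ := by
  have hstep (p : Fin n) : F p.castSucc = F p.succ ⊔ F p.castSucc ⊓ E p.succ := by
    rw [inf_comm, ← sup_inf_assoc_of_le _ (hF (castSucc_le_succ p)), (hcodisj p.succ).eq_top,
      top_inf_eq]
  have hle (i : Fin (n + 1)) : F i ≤ ⨆ p : Fin n, F p.castSucc ⊓ E p.succ := by
    induction i using reverseInduction with
    | last => exact hFlast.le.trans bot_le
    | cast p ih =>
      exact (hstep p).le.trans (sup_le ih (le_iSup (fun p => F p.castSucc ⊓ E p.succ) p))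
  rw [eq_top_iff, ← hF0]
  exact hle 0

end ModularLattice

theorem stmt7_general (K : Type*) [Field K] (H : Type*) [AddCommGroup H] [Module K H]
    (n : ℕ)
    (F G : Fin (n + 2) → Submodule K H)
    (hFmono : ∀ i j : Fin (n + 2), i ≤ j → F j ≤ F i)
    (hGmono : ∀ i j : Fin (n + 2), i ≤ j → G j ≤ G i)
    (hF0 : F 0 = ⊤)
    (hFtop : F (Fin.last (n + 1)) = ⊥)
    (hopp : ∀ p : Fin (n + 2), F p ⊓ G (Fin.rev p) = ⊥ ∧ F p ⊔ G (Fin.rev p) = ⊤) :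
    DirectSum.IsInternal (fun p : Fin (n + 1) =>
      F (Fin.castSucc p) ⊓ G ((Fin.last n - p).castSucc)) := by
  have hF : Antitone F := fun i j => hFmono i j
  have hE : Monotone fun i => G (Fin.rev i) := fun i j hij => hGmono _ _ (Fin.rev_le_rev.mpr hij)
  have hpieces : (fun p : Fin (n + 1) => F p.castSucc ⊓ G (Fin.last n - p).castSucc) =
      fun p => F p.castSucc ⊓ G p.succ.rev := by
    simp only [Fin.last_sub, Fin.rev_succ]
  rw [hpieces, DirectSum.isInternal_submodule_iff_iSupIndep_and_iSup_eq_top]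
  exact ⟨Fin.iSupIndep_inf_castSucc_succ hF hE fun i => disjoint_iff.mpr (hopp i).1,
    Fin.iSup_inf_castSucc_succ_eq_top (E := fun i => G (Fin.rev i)) hF hF0 hFtop
      fun i => codisjoint_iff.mpr (hopp i).2⟩

/-- Let `K` be a field, `H` a finite-dimensional `K`-vector space, `n ≥ 0`,
and let `F^0 ⊇ ⋯ ⊇ F^{n+1}` and `G^0 ⊇ ⋯ ⊇ G^{n+1}` be decreasing chains of subspaces of `H`
with `F^0 = G^0 = H`, `F^{n+1} = G^{n+1} = 0`, which are opposite, i.e.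
`H = F^p ⊕ G^{n+1-p}` for every `0 ≤ p ≤ n+1`.  Then `H = ⊕_{p+q=n} (F^p ∩ G^q)`:
the subspaces `H^{p,n-p} = F^p ∩ G^{n-p}`, `0 ≤ p ≤ n`, are independent and span `H`. -/
theorem stmt7 (K : Type*) [Field K] (H : Type*) [AddCommGroup H] [Module K H]
    [FiniteDimensional K H] (n : ℕ)
    (F G : Fin (n + 2) → Submodule K H)
    (hFmono : ∀ i j : Fin (n + 2), i ≤ j → F j ≤ F i)
    (hGmono : ∀ i j : Fin (n + 2), i ≤ j → G j ≤ G i)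
    (hF0 : F 0 = ⊤) (hG0 : G 0 = ⊤)
    (hFtop : F (Fin.last (n + 1)) = ⊥) (hGtop : G (Fin.last (n + 1)) = ⊥)
    (hopp : ∀ p : Fin (n + 2), F p ⊓ G (Fin.rev p) = ⊥ ∧ F p ⊔ G (Fin.rev p) = ⊤) :
    DirectSum.IsInternal (fun p : Fin (n + 1) =>
      F (Fin.castSucc p) ⊓ G ((Fin.last n - p).castSucc)) :=
  stmt7_general K H n F G hFmono hGmono hF0 hFtop hopp
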